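/- arXiv:2409.15660 — 2 statements merged into one kernel-verified Lean document; each statement's English description precedes it below -/
import Mathlib

section
/- The double integral of the function (a,b) ↦ 1/(ab) over the Farey triangle Δ equals ζ(2) = π²/6; equivalently, ∫_Δ R(a,b)·2 da db = 2ζ(2), where R(a,b) = 1/(ab) is the return-time function of the horocycle flow to the Athreya–Cheung transversal. -/
open MeasureTheory Real

noncomputable section

/-- The Farey triangle `Δ = {(a,b) : 0 < a ≤ 1, 0 < b ≤ 1, a + b > 1}`. -/
def FareyTriangle : Set (ℝ × ℝ) :=
  {p | 0 < p.1 ∧ p.1 ≤ 1 ∧ 0 < p.2 ∧ p.2 ≤ 1 ∧ 1 < p.1 + p.2}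

/-- The return-time function `R(a,b) = 1/(ab)` of the horocycle flow to the
Athreya–Cheung transversal. -/
def returnTime (p : ℝ × ℝ) : ℝ := 1 / (p.1 * p.2)

lemma meas_farey : MeasurableSet FareyTriangle := by
  unfold FareyTriangle
  exact MeasurableSet.inter (measurableSet_lt measurable_const measurable_fst)
    (MeasurableSet.inter (measurableSet_le measurable_fst measurable_const)
      (MeasurableSet.inter (measurableSet_lt measurable_const measurable_snd)
        (MeasurableSet.inter (measurableSet_le measurable_snd measurable_const)
          (measurableSet_lt measurable_const (measurable_fst.add measurable_snd)))))

lemma measurable_g : Measurable (fun p : ℝ × ℝ => ENNReal.ofReal (returnTime p)) := by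
  apply ENNReal.measurable_ofReal.comp
  unfold returnTime
  simp only [one_div]
  exact (measurable_fst.mul measurable_snd).inv

lemma meas_farey' : MeasurableSet (FareyTriangle ∩ {p : ℝ × ℝ | p.1 < 1}) :=
  meas_farey.inter (measurableSet_lt measurable_fst measurable_const)

/-- Inner integral: `∫_{1-a}^1 db/(ab) = -log(1-a)/a`. -/
lemma inner_lintegral (a : ℝ) (ha : 0 < a) (ha1 : a < 1) :
    ∫⁻ b in Set.Ioc (1-a) 1, ENNReal.ofReal (1/(a*b)) = ENNReal.ofReal (-Real.log (1-a) / a) := by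
  have h1a : (0:ℝ) < 1 - a := by linarith
  have hcont : ContinuousOn (fun b : ℝ => 1/(a*b)) (Set.Icc (1-a) 1) := by
    apply ContinuousOn.div continuousOn_const
    · fun_prop
    · rintro x ⟨hx1, hx2⟩
      have hx : 0 < x := lt_of_lt_of_le h1a hx1
      positivity
  have hint : IntegrableOn (fun b : ℝ => 1/(a*b)) (Set.Ioc (1-a) 1) := by
    exact (hcont.integrableOn_compact isCompact_Icc).mono_set Set.Ioc_subset_Icc_self
  rw [← ofReal_integral_eq_lintegral_ofReal hint]
  · congr 1
    rw [← intervalIntegral.integral_of_le (le_of_lt (by linarith))]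
    have : ∀ b ∈ Set.uIcc (1-a) 1, (1:ℝ)/(a*b) = (1/a) * (1/b) := by
      intro b _; field_simp
    rw [intervalIntegral.integral_congr this, intervalIntegral.integral_const_mul,
      integral_one_div (by
        simp only [Set.uIcc_of_le (by linarith : (1:ℝ)-a ≤ 1)]
        intro h; exact absurd h.1 (by linarith))]
    rw [one_div (1-a), Real.log_inv]
    ring
  · filter_upwards [ae_restrict_mem measurableSet_Ioc] with b hb
    have : 0 < b := lt_trans h1a hb.1
    positivity

/-- Series expansion of `-log(1-a)/a` in `ℝ≥0∞`. -/
lemma series_expansion (a : ℝ) (ha : 0 < a) (ha1 : a < 1) :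
    ENNReal.ofReal (-Real.log (1-a) / a) = ∑' n : ℕ, ENNReal.ofReal (a^n / (n+1)) := by
  have h : HasSum (fun n : ℕ => a^(n+1)/(n+1)) (-Real.log (1-a)) :=
    Real.hasSum_pow_div_log_of_abs_lt_one (by rw [abs_of_pos ha]; exact ha1)
  have h2 : HasSum (fun n : ℕ => a^n/(n+1)) (-Real.log (1-a) / a) := by
    have := h.div_const a
    convert this using 2 with n
    · rfl
    field_simp [pow_succ]
    ring
  rw [← h2.tsum_eq]
  exact ENNReal.ofReal_tsum_of_nonneg (fun n => by positivity) h2.summable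

/-- Termwise integral. -/
lemma term_lintegral (n : ℕ) :
    ∫⁻ a in Set.Ioo (0:ℝ) 1, ENNReal.ofReal (a^n / (n+1)) =
      ENNReal.ofReal (1 / ((n:ℝ)+1)^2) := by
  have hint : IntegrableOn (fun a : ℝ => a^n / (n+1)) (Set.Ioo (0:ℝ) 1) :=
    ((Continuous.integrableOn_Ioc (by continuity)).mono_set Set.Ioo_subset_Ioc_self)
  rw [← ofReal_integral_eq_lintegral_ofReal hint]
  · congr 1
    rw [← MeasureTheory.integral_Ioc_eq_integral_Ioo,
      ← intervalIntegral.integral_of_le zero_le_one]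
    rw [intervalIntegral.integral_div, integral_pow]
    have : ((n:ℝ)+1) ≠ 0 := by positivity
    field_simp
    ring
  · filter_upwards [ae_restrict_mem measurableSet_Ioo] with b hb
    have : 0 < b := hb.1
    positivity

/-- Summing the series: Basel problem. -/
lemma basel_sum : ∑' n : ℕ, ENNReal.ofReal (1 / ((n:ℝ)+1)^2) = ENNReal.ofReal (π^2/6) := by
  have h : HasSum (fun n : ℕ => 1 / ((n:ℝ)+1)^2) (π^2/6) := by
    have := hasSum_zeta_two
    rw [← hasSum_nat_add_iff' 1] at this
    simpa using this
  rw [← h.tsum_eq]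
  exact (ENNReal.ofReal_tsum_of_nonneg (fun n => by positivity) h.summable).symm

/-- Fubini step. -/
lemma fubini_step :
    ∫⁻ p in FareyTriangle, ENNReal.ofReal (returnTime p) =
      ∫⁻ a in Set.Ioo (0:ℝ) 1, ∫⁻ b in Set.Ioc (1-a) 1, ENNReal.ofReal (1/(a*b)) := by
  set Δ' := FareyTriangle ∩ {p : ℝ × ℝ | p.1 < 1} with hΔ'
  have hae : FareyTriangle =ᵐ[volume] Δ' := by
    rw [Filter.eventuallyEq_set]
    have hnull : volume ({p : ℝ × ℝ | p.1 = 1}) = 0 := by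
      have : {p : ℝ × ℝ | p.1 = 1} = ({1} : Set ℝ) ×ˢ (Set.univ : Set ℝ) := by
        ext ⟨x, y⟩; simp [Set.mem_prod, eq_comm]
      rw [this, MeasureTheory.Measure.volume_eq_prod, Measure.prod_prod]
      simp
    filter_upwards [measure_eq_zero_iff_ae_notMem.mp hnull] with p hp
    simp only [hΔ', Set.mem_inter_iff, Set.mem_setOf_eq, iff_self_and]
    exact fun hF => lt_of_le_of_ne hF.2.1 hp
  rw [setLIntegral_congr hae, ← lintegral_indicator meas_farey' _,
    MeasureTheory.Measure.volume_eq_prod, lintegral_prod _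
      ((measurable_g.indicator meas_farey').aemeasurable)]
  have key : ∀ a : ℝ, (∫⁻ b, Δ'.indicator (fun p => ENNReal.ofReal (returnTime p)) (a, b)) =
      (Set.Ioo (0:ℝ) 1).indicator
        (fun a => ∫⁻ b in Set.Ioc (1-a) 1, ENNReal.ofReal (1/(a*b))) a := by
    intro a
    by_cases ha : a ∈ Set.Ioo (0:ℝ) 1
    · rw [Set.indicator_of_mem ha]
      have : ∀ b : ℝ, Δ'.indicator (fun p => ENNReal.ofReal (returnTime p)) (a, b) =
          (Set.Ioc (1-a) 1).indicator (fun b => ENNReal.ofReal (1/(a*b))) b := by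
        intro b
        rcases ha with ⟨ha0, ha1⟩
        by_cases hb : b ∈ Set.Ioc (1-a) 1
        · rw [Set.indicator_of_mem hb, Set.indicator_of_mem]
          · rfl
          · exact ⟨⟨ha0, le_of_lt ha1, by linarith [hb.1], hb.2, by linarith [hb.1]⟩, ha1⟩
        · rw [Set.indicator_of_notMem hb, Set.indicator_of_notMem]
          intro hmem
          exact hb ⟨by linarith [hmem.1.2.2.2.2, hmem.1.2.1], hmem.1.2.2.2.1⟩
      rw [lintegral_congr this, ← lintegral_indicator measurableSet_Ioc _]
    · rw [Set.indicator_of_notMem ha]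
      have : ∀ b : ℝ, Δ'.indicator (fun p => ENNReal.ofReal (returnTime p)) (a, b) = 0 := by
        intro b
        apply Set.indicator_of_notMem
        intro hmem
        rcases hmem with ⟨⟨h1, h2, _, _, _⟩, h6⟩
        exact ha ⟨h1, h6⟩
      simp [lintegral_congr this]
  simp only [← hΔ', key]
  rw [← lintegral_indicator measurableSet_Ioo _]

lemma main_lintegral :
    ∫⁻ p in FareyTriangle, ENNReal.ofReal (returnTime p) = ENNReal.ofReal (π^2/6) := by
  rw [fubini_step]
  rw [setLIntegral_congr_fun measurableSet_Ioo
    ((fun a ha => by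
      rw [inner_lintegral a ha.1 ha.2, series_expansion a ha.1 ha.2]))]
  rw [lintegral_tsum (f := fun (n : ℕ) (a : ℝ) => ENNReal.ofReal (a^n / (n+1)))
    (fun n => (ENNReal.measurable_ofReal.comp
      ((measurable_id.pow_const n).div_const _)).aemeasurable)]
  simp only [term_lintegral]
  exact basel_sum

/-- The integral of `1/(ab)` over the Farey triangle equals `ζ(2) = π²/6`;
equivalently, `∫_Δ R(a,b) · 2 da db = 2 ζ(2)`. -/
theorem integral_returnTime_farey_triangle :
    (∫ p in FareyTriangle, returnTime p) = π ^ 2 / 6 ∧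
    (∫ p in FareyTriangle, returnTime p * 2) = 2 * (π ^ 2 / 6) := by
  have h1 : (∫ p in FareyTriangle, returnTime p) = π ^ 2 / 6 := by
    rw [integral_eq_lintegral_of_nonneg_ae, main_lintegral,
      ENNReal.toReal_ofReal (by positivity)]
    · filter_upwards [ae_restrict_mem meas_farey] with p hp
      have h1 : 0 < p.1 := hp.1
      have h2 : 0 < p.2 := hp.2.2.1
      unfold returnTime
      positivity
    · have : Measurable returnTime := by
        unfold returnTime
        simp only [one_div]
        exact (measurable_fst.mul measurable_snd).inv
      exact this.aestronglyMeasurable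
  refine ⟨h1, ?_⟩
  rw [integral_mul_const, h1]
  ring
end
end

section
/- Let (a,b) ∈ Δ. Then: (i) for every s with 0 < s < 1/(ab), the point h_s·p_{a,b}·Γ does not lie in the transversal Ω; and (ii) h_{1/(ab)}·p_{a,b}·Γ = p_{a',b'}·Γ ∈ Ω, where a' = b and b' = ⌊(1+a)/b⌋·b − a, and moreover (a',b') ∈ Δ. In other words, the first return time of the horocycle flow starting at p_{a,b}Γ to Ω is R(a,b) = 1/(ab), and the first return map is the BCZ map (a,b) ↦ (b, ⌊(1+a)/b⌋·b − a). -/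
open MeasureTheory Real Matrix

noncomputable section

/-- `G = SL(2,ℝ)`. -/
abbrev G := Matrix.SpecialLinearGroup (Fin 2) ℝ

/-- `Γ ≤ G` is the image of `SL(2,ℤ)` in `SL(2,ℝ)`. -/
def Γ : Subgroup G := (Matrix.SpecialLinearGroup.map (n := Fin 2) (Int.castRingHom ℝ)).range

/-- The (unstable) horocycle flow matrices `h_s = [[1,0],[-s,1]]`. -/
def hMat (s : ℝ) : G := ⟨!![1, 0; -s, 1], by simp [Matrix.det_fin_two_of]⟩

/-- The matrices `p_{a,b} = [[a,b],[0,a⁻¹]]` (defined to be `1` in the degenerate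
case `a = 0`, which never occurs in our usage). -/
def pSL (a b : ℝ) : G :=
  if h : a ≠ 0 then ⟨!![a, b; 0, a⁻¹], by rw [Matrix.det_fin_two_of]; field_simp <;> simp⟩ else 1

/-- The Athreya–Cheung transversal `Ω = {p_{a,b} Γ : (a,b) ∈ Δ} ⊆ G/Γ`. -/
def Ω : Set (G ⧸ Γ) :=
  {x | ∃ a b : ℝ, (a, b) ∈ FareyTriangle ∧ x = QuotientGroup.mk (pSL a b)}

/-- For `(a,b) ∈ Δ`: (i) for `0 < s < 1/(ab)` the point `h_s p_{a,b} Γ` is not in the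
transversal `Ω`; (ii) `h_{1/(ab)} p_{a,b} Γ = p_{a',b'} Γ ∈ Ω` with `a' = b`,
`b' = ⌊(1+a)/b⌋ b − a`, and `(a',b') ∈ Δ`.  Thus the first return time of the horocycle
flow starting at `p_{a,b}Γ` to `Ω` is `R(a,b) = 1/(ab)` and the first return map is the
BCZ map `(a,b) ↦ (b, ⌊(1+a)/b⌋ b − a)`. -/
theorem horocycle_first_return_to_transversal (a b : ℝ) (hab : (a, b) ∈ FareyTriangle) :
    (∀ s : ℝ, 0 < s → s < 1 / (a * b) →
      (QuotientGroup.mk (hMat s * pSL a b) : G ⧸ Γ) ∉ Ω) ∧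
    (b, (⌊(1 + a) / b⌋ : ℝ) * b - a) ∈ FareyTriangle ∧
    (QuotientGroup.mk (hMat (1 / (a * b)) * pSL a b) : G ⧸ Γ) =
      QuotientGroup.mk (pSL b ((⌊(1 + a) / b⌋ : ℝ) * b - a)) ∧
    (QuotientGroup.mk (hMat (1 / (a * b)) * pSL a b) : G ⧸ Γ) ∈ Ω := by
  obtain ⟨ha, ha1, hb, hb1, hab1⟩ := hab
  simp only at ha ha1 hb hb1 hab1
  have ha0 : a ≠ 0 := ne_of_gt ha
  have hb0 : b ≠ 0 := ne_of_gt hb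
  -- Part (i)
  have part1 : ∀ s : ℝ, 0 < s → s < 1 / (a * b) →
      (QuotientGroup.mk (hMat s * pSL a b) : G ⧸ Γ) ∉ Ω := by
    intro s hs hs'
    rintro ⟨a', b', ⟨ha', ha'1, hb', hb'1, hab'⟩, heq⟩
    simp only at ha' ha'1 hb' hb'1 hab'
    rw [QuotientGroup.eq] at heq
    obtain ⟨γ, hγ⟩ := heq
    have ha'0 : a' ≠ 0 := ne_of_gt ha'
    have hP : pSL a' b' =
        (hMat s * pSL a b) * Matrix.SpecialLinearGroup.map (Int.castRingHom ℝ) γ := by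
      rw [hγ, mul_inv_cancel_left]
    have hM : (pSL a' b' : Matrix (Fin 2) (Fin 2) ℝ) =
        ((hMat s : Matrix (Fin 2) (Fin 2) ℝ) * (pSL a b : Matrix (Fin 2) (Fin 2) ℝ)) *
          ((Matrix.SpecialLinearGroup.map (Int.castRingHom ℝ) γ : G) :
            Matrix (Fin 2) (Fin 2) ℝ) := by
      rw [hP]
      simp [mul_assoc]
    set m : ℤ := (γ : Matrix (Fin 2) (Fin 2) ℤ) 0 0 with hm
    set n : ℤ := (γ : Matrix (Fin 2) (Fin 2) ℤ) 1 0 with hnn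
    have e1 : a * (m:ℝ) + b * (n:ℝ) = a' := by
      have := congrFun (congrFun hM 0) 0
      simp [pSL, hMat, ha0, ha'0, Matrix.mul_apply, Fin.sum_univ_two,
        Matrix.SpecialLinearGroup.map_apply_coe] at this
      linarith [this]
    have e2 : -(s*a) * (m:ℝ) + (a⁻¹ - s*b) * (n:ℝ) = 0 := by
      have := congrFun (congrFun hM 1) 0
      simp [pSL, hMat, ha0, ha'0, Matrix.mul_apply, Fin.sum_univ_two,
        Matrix.SpecialLinearGroup.map_apply_coe] at this
      linarith [this]
    have hn : (n:ℝ) = s * a * a' := by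
      have h4 : a⁻¹ * (n:ℝ) = (s*a)*m + (s*b)*n := by linarith
      have h3 : (n:ℝ) = a * ((s*a)*m + (s*b)*n) := by
        rw [← h4]; field_simp
      rw [h3]; linear_combination (s*a)*e1
    have hsab : s * (a*b) < 1 := by
      rw [lt_div_iff₀ (by positivity)] at hs'; linarith
    have hn1 : (1:ℝ) ≤ (n:ℝ) := by
      have : (0:ℝ) < (n:ℝ) := by rw [hn]; positivity
      exact_mod_cast Int.cast_pos.mp this
    have hm1 : (1:ℝ) ≤ (m:ℝ) := by
      have hbn : b * (n:ℝ) < a' := by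
        rw [hn]; nlinarith
      have : (0:ℝ) < (m:ℝ) := by nlinarith
      exact_mod_cast Int.cast_pos.mp this
    nlinarith [mul_le_mul_of_nonneg_left hm1 ha.le, mul_le_mul_of_nonneg_left hn1 hb.le]
  -- Parts (ii)-(iv)
  set k : ℤ := ⌊(1 + a) / b⌋ with hk
  have hk1 : (k:ℝ) * b ≤ 1 + a := by
    have := Int.floor_le ((1 + a) / b)
    rw [le_div_iff₀ hb] at this
    exact this
  have hk2 : 1 + a < ((k:ℝ) + 1) * b := by
    have := Int.lt_floor_add_one ((1 + a) / b)
    rw [div_lt_iff₀ hb] at this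
    exact_mod_cast this
  have hF : (b, (k:ℝ) * b - a) ∈ FareyTriangle := by
    refine ⟨hb, hb1, ?_, ?_, ?_⟩ <;> · show _; dsimp only; nlinarith
  have hEq : (QuotientGroup.mk (hMat (1 / (a * b)) * pSL a b) : G ⧸ Γ) =
      QuotientGroup.mk (pSL b ((k:ℝ) * b - a)) := by
    rw [QuotientGroup.eq]
    refine ⟨⟨!![0, -1; 1, k], by simp [Matrix.det_fin_two_of]⟩, ?_⟩
    rw [eq_inv_mul_iff_mul_eq]
    apply Subtype.ext
    simp only [Matrix.SpecialLinearGroup.coe_mul, Matrix.SpecialLinearGroup.map_apply_coe]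
    erw [Matrix.SpecialLinearGroup.map_apply_coe]
    simp only [pSL, hMat, dif_pos ha0, dif_pos hb0]
    ext i j
    fin_cases i <;> fin_cases j <;>
      · simp [Matrix.mul_apply, Fin.sum_univ_two, Matrix.SpecialLinearGroup.coe_mul, ha0, hb0]
        try field_simp
        try ring
        try simp
  exact ⟨part1, hF, hEq, b, (k:ℝ) * b - a, hF, hEq⟩
end
end
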